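/- arXiv:2106.11568 — 6 statements merged into one kernel-verified Lean document; each statement's English description precedes it below -/
import Mathlib

section
/- Let n ≥ 1 and let R be a commutative ring. For any elements X₁,…,Xₙ and Y₁,…,Yₙ of R, the n×n determinant det_{1≤i,j≤n}( X_i^j − Y_i^j ) equals the joint antisymmetrization ∑_{σ ∈ S_n} sgn(σ) · ∏_{1 ≤ i ≤ j ≤ n} ( X_{σ(j)} − Y_{σ(i)} ), where S_n is the symmetric group on {1,…,n}. -/
/-!
Let `p(t) = ∏ᵢ (t - Yᵢ)`, monic of degree `n`. Since `p(Yᵣ) = 0`, adding to the last column the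
combination of the other columns with the coefficients of `p` turns it into `(∏ᵢ (Xᵣ - Yᵢ))ᵣ`.
In the joint antisymmetrization, the factors with `j = n` give the same product `∏ᵢ (X_{σ n} - Yᵢ)`.
Hence both sides are sums over `σ` of `sgn σ · ∏ᵢ (X_{σ n} - Yᵢ)` times an expression in the rows
`σ 1, …, σ (n-1)`, and antisymmetrizing over those rows gives the two sides of the identity in
size `n - 1`; induction on `n` concludes.
-/

section

open Finset Equiv Polynomial

variable {R : Type*} [CommRing R]

lemma Fin.Ici_castSucc {n : ℕ} (i : Fin n) :
    Ici i.castSucc = insert (Fin.last n) ((Ici i).map Fin.castSuccEmb) := by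
  rw [Fin.map_castSuccEmb_Ici, Finset.Ico_insert_right (Fin.le_last _), ← Fin.top_eq_last,
    Finset.Icc_top]

lemma Fin.prod_Ici_castSucc {M : Type*} [CommMonoid M] {n : ℕ} (i : Fin n) (f : Fin (n + 1) → M) :
    ∏ j ∈ Ici i.castSucc, f j = f (Fin.last n) * ∏ j ∈ Ici i, f j.castSucc := by
  rw [Fin.Ici_castSucc, prod_insert (by simp), prod_map, Fin.coe_castSuccEmb]

lemma Fin.prod_prod_Ici_univ_castSucc {M : Type*} [CommMonoid M] {n : ℕ}
    (f : Fin (n + 1) → Fin (n + 1) → M) :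
    ∏ i, ∏ j ∈ Ici i, f i j =
      (∏ i, f i (Fin.last n)) * ∏ i : Fin n, ∏ j ∈ Ici i, f i.castSucc j.castSucc := by
  simp only [Fin.prod_univ_castSucc, Fin.prod_Ici_castSucc, ← Fin.top_eq_last, Ici_top,
    prod_singleton, prod_mul_distrib]
  ac_rfl

theorem Equiv.Perm.sum_sign_smul_mul_comp_castSucc_congr {n : ℕ} (c : Fin (n + 1) → R)
    {F G : (Fin n → Fin (n + 1)) → R}
    (h : ∀ φ, ∑ τ : Perm (Fin n), (Perm.sign τ : ℤ) • F (φ ∘ τ) =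
      ∑ τ : Perm (Fin n), (Perm.sign τ : ℤ) • G (φ ∘ τ)) :
    ∑ σ : Perm (Fin (n + 1)),
        (Perm.sign σ : ℤ) • (c (σ (Fin.last n)) * F (σ ∘ Fin.castSucc)) =
      ∑ σ : Perm (Fin (n + 1)),
        (Perm.sign σ : ℤ) • (c (σ (Fin.last n)) * G (σ ∘ Fin.castSucc)) := by
  let e : Option (Fin n) × Perm (Fin n) ≃ Perm (Fin (n + 1)) :=
    Perm.decomposeOption.symm.trans finSuccEquivLast.symm.permCongr
  have he : ∀ a τ, e (a, τ) ∘ Fin.castSucc =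
      (finSuccEquivLast.symm ∘ swap none a ∘ some) ∘ τ := by
    intro a τ; ext m; simp [e, Equiv.permCongr_apply]
  have hlast : ∀ a τ, e (a, τ) (Fin.last n) = finSuccEquivLast.symm a := by
    intro a τ; simp [e, Equiv.permCongr_apply]
  have hsign : ∀ a τ, Perm.sign (e (a, τ)) = Perm.sign (swap none a) * Perm.sign τ := by
    intro a τ; simp [e, Perm.sign_permCongr]
  simp only [← e.sum_comp, Fintype.sum_prod_type, he, hlast, hsign, Units.val_mul, mul_smul,
    ← mul_smul_comm, ← Finset.smul_sum, ← Finset.mul_sum, h]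

lemma Polynomial.eval_sub_eval_eq_sum_coeff_mul_pow_sub {p : R[X]} {N : ℕ} (hp : p.natDegree ≤ N)
    (x y : R) :
    p.eval x - p.eval y =
      ∑ i : Fin N, p.coeff ((i : ℕ) + 1) * (x ^ ((i : ℕ) + 1) - y ^ ((i : ℕ) + 1)) := by
  rw [eval_eq_sum_range' (Nat.lt_succ_of_le hp), eval_eq_sum_range' (Nat.lt_succ_of_le hp),
    ← sum_sub_distrib, sum_range_succ',
    Fin.sum_univ_eq_sum_range (fun i => p.coeff (i + 1) * (x ^ (i + 1) - y ^ (i + 1)))]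
  simp [mul_sub]

def powSubPowMatrix {n : ℕ} (x y : Fin n → R) : Matrix (Fin n) (Fin n) R :=
  Matrix.of fun i j => x i ^ ((j : ℕ) + 1) - y i ^ ((j : ℕ) + 1)

def jointAntisymm {n : ℕ} (x y : Fin n → R) : R :=
  ∑ σ : Perm (Fin n), (Perm.sign σ : ℤ) • ∏ i, ∏ j ∈ Ici i, (x (σ j) - y (σ i))

lemma det_powSubPowMatrix_eq_det_updateCol {n : ℕ} (x y : Fin (n + 1) → R) :
    (powSubPowMatrix x y).det =
      ((powSubPowMatrix x y).updateCol (Fin.last n) fun r => ∏ i, (x r - y i)).det := by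
  nontriviality R
  set p : R[X] := ∏ i, (X - C (y i))
  have hdeg : p.natDegree = n + 1 := by simp [p]
  have hcoeff : p.coeff (n + 1) = 1 := by
    rw [← hdeg]; exact (monic_prod_of_monic _ _ fun i _ => monic_X_sub_C (y i)).coeff_natDegree
  have hcol : (fun r => ∏ i, (x r - y i)) =
      fun r => ∑ j : Fin (n + 1), p.coeff ((j : ℕ) + 1) • powSubPowMatrix x y r j := by
    ext r
    simp only [powSubPowMatrix, Matrix.of_apply, smul_eq_mul]
    have hroot : p.eval (y r) = 0 := by
      simpa [p, eval_prod] using prod_eq_zero (mem_univ r) (sub_self (y r))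
    rw [← sub_zero (∏ i, _), ← hroot, ← eval_sub_eval_eq_sum_coeff_mul_pow_sub hdeg.le]
    simp [p, eval_prod]
  rw [hcol, Matrix.det_updateCol_sum, Fin.val_last, hcoeff, one_smul]

theorem det_powSubPowMatrix {n : ℕ} (x y : Fin n → R) :
    (powSubPowMatrix x y).det = jointAntisymm x y := by
  induction n with
  | zero => simp [jointAntisymm]
  | succ n ih =>
    set c : Fin (n + 1) → R := fun r => ∏ i, (x r - y i)
    calc (powSubPowMatrix x y).det
        = ((powSubPowMatrix x y).updateCol (Fin.last n) c).det :=
          det_powSubPowMatrix_eq_det_updateCol x y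
      _ = ∑ σ : Perm (Fin (n + 1)), (Perm.sign σ : ℤ) • (c (σ (Fin.last n)) *
            ∏ m : Fin n,
              (x (σ m.castSucc) ^ ((m : ℕ) + 1) - y (σ m.castSucc) ^ ((m : ℕ) + 1))) := by
          rw [Matrix.det_apply]
          refine sum_congr rfl fun σ _ => ?_
          rw [Units.smul_def, Fin.prod_univ_castSucc, mul_comm, Matrix.updateCol_self]
          congr 2
          refine prod_congr rfl fun m _ => ?_
          rw [Matrix.updateCol_ne (Fin.castSucc_lt_last m).ne]
          rfl
      _ = ∑ σ : Perm (Fin (n + 1)), (Perm.sign σ : ℤ) • (c (σ (Fin.last n)) *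
            ∏ i : Fin n, ∏ j ∈ Ici i, (x (σ j.castSucc) - y (σ i.castSucc))) :=
          Perm.sum_sign_smul_mul_comp_castSucc_congr c
            (F := fun φ => ∏ m : Fin n, (x (φ m) ^ ((m : ℕ) + 1) - y (φ m) ^ ((m : ℕ) + 1)))
            (G := fun φ => ∏ i : Fin n, ∏ j ∈ Ici i, (x (φ j) - y (φ i))) fun φ => by
            simpa [Matrix.det_apply, Units.smul_def, powSubPowMatrix, jointAntisymm]
              using ih (x ∘ φ) (y ∘ φ)
      _ = jointAntisymm x y := by
          refine sum_congr rfl fun σ _ => ?_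
          rw [Fin.prod_prod_Ici_univ_castSucc (fun i j => x (σ j) - y (σ i)),
            Equiv.prod_comp σ (fun i => x (σ (Fin.last n)) - y i)]

end

theorem stmt0_general {R : Type*} [CommRing R] (n : ℕ) (X Y : Fin n → R) :
    Matrix.det (Matrix.of fun i j : Fin n => X i ^ ((j : ℕ) + 1) - Y i ^ ((j : ℕ) + 1)) =
      ∑ σ : Equiv.Perm (Fin n),
        (Equiv.Perm.sign σ : ℤ) •
          ∏ i : Fin n, ∏ j ∈ Finset.Ici i, (X (σ j) - Y (σ i)) :=
  det_powSubPowMatrix X Y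

/-- Lemma 6.1: det(X_i^j - Y_i^j) equals the joint antisymmetrization of
∏_{1 ≤ i ≤ j ≤ n} (X_j - Y_i). -/
theorem stmt0 {R : Type*} [CommRing R] (n : ℕ) (hn : 1 ≤ n) (X Y : Fin n → R) :
    Matrix.det (Matrix.of fun i j : Fin n => X i ^ ((j : ℕ) + 1) - Y i ^ ((j : ℕ) + 1)) =
      ∑ σ : Equiv.Perm (Fin n),
        (Equiv.Perm.sign σ : ℤ) •
          ∏ i : Fin n, ∏ j ∈ Finset.Ici i, (X (σ j) - Y (σ i)) :=
  stmt0_general n X Y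
end

section
/- Let n ≥ 1, let K be a field, let u, v, w ∈ K, and let X₁,…,Xₙ be nonzero elements of K. Then ∑_{σ ∈ S_n} sgn(σ) · ∏_{1 ≤ p ≤ q ≤ n} ( u·X_{σ(q)} + v·X_{σ(p)}⁻¹ + w ) = det_{1≤i,j≤n}( (u·X_i + w)^j − (−v·X_i⁻¹)^j ). -/
/-!
With `A = u X + w` and `B = -v X⁻¹` the identity holds for arbitrary `A`, `B` in any commutative
ring, because both sides satisfy the same recursion in `n`. Splitting a permutation according to the value
`k = σ 0`, the row `p = 0` of the triangular product contributes `∏ l, (A l - B k)`, and what remains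
is the same alternating sum over the other `n` points, with sign `(-1) ^ k`. On the determinant
side, adding to the last column the combination of the other columns whose coefficients are those
of `P = ∏ l, (X - A l)` turns its entries into `P (A i) - P (B i) = (-1) ^ n ∏ l, (A l - B i)`, and
Laplace expansion along that column gives the same recursion.
-/

open Finset Matrix Equiv

theorem Fin.prod_prod_Ici_succ {M : Type*} [CommMonoid M] {n : ℕ}
    (f : Fin (n + 1) → Fin (n + 1) → M) :
    ∏ p, ∏ q ∈ Ici p, f p q = (∏ q, f 0 q) * ∏ p : Fin n, ∏ q ∈ Ici p, f p.succ q.succ := by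
  simp only [Fin.prod_univ_succ (fun p => ∏ q ∈ Ici p, f p q), ← bot_eq_zero, Ici_bot,
    ← Fin.map_succEmb_Ici, prod_map, Fin.coe_succEmb]

theorem Matrix.det_updateCol_mulVec {m R : Type*} [Fintype m] [DecidableEq m] [CommRing R]
    (A : Matrix m m R) (c : m → R) (j : m) :
    (A.updateCol j (A *ᵥ c)).det = c j * A.det := by
  rw [← cramer_apply, cramer_eq_adjugate_mulVec, mulVec_mulVec, adjugate_mul, smul_mulVec,
    one_mulVec, Pi.smul_apply, smul_eq_mul, mul_comm]

theorem Polynomial.eval_sub_eval_eq_sum {R : Type*} [CommRing R] {p : Polynomial R} {n : ℕ}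
    (hp : p.natDegree ≤ n) (a b : R) :
    p.eval a - p.eval b =
      ∑ j : Fin n, p.coeff ((j : ℕ) + 1) * (a ^ ((j : ℕ) + 1) - b ^ ((j : ℕ) + 1)) := by
  rw [eval_eq_sum_range' (Nat.lt_succ_of_le hp), eval_eq_sum_range' (Nat.lt_succ_of_le hp),
    ← sum_sub_distrib, sum_range_succ',
    Fin.sum_univ_eq_sum_range (fun j => p.coeff (j + 1) * (a ^ (j + 1) - b ^ (j + 1)))]
  simp [mul_sub]

namespace Equiv.Perm

variable {n : ℕ}

def succAboveCons (k : Fin (n + 1)) (e : Perm (Fin n)) : Perm (Fin (n + 1)) :=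
  (Fin.cycleRange k)⁻¹ * decomposeFin.symm (0, e)

@[simp]
theorem succAboveCons_zero (k : Fin (n + 1)) (e : Perm (Fin n)) : succAboveCons k e 0 = k := by
  rw [succAboveCons, mul_apply, decomposeFin_symm_apply_zero, inv_eq_iff_eq,
    Fin.cycleRange_self]

@[simp]
theorem succAboveCons_succ (k : Fin (n + 1)) (e : Perm (Fin n)) (i : Fin n) :
    succAboveCons k e i.succ = k.succAbove (e i) := by
  rw [succAboveCons, mul_apply, decomposeFin_symm_apply_succ, swap_self, refl_apply,
    inv_eq_iff_eq, Fin.cycleRange_succAbove]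

theorem sign_succAboveCons (k : Fin (n + 1)) (e : Perm (Fin n)) :
    sign (succAboveCons k e) = (-1) ^ (k : ℕ) * sign e := by
  simp [succAboveCons, decomposeFin.symm_sign, Fin.sign_cycleRange]

theorem succAboveCons_bijective :
    Function.Bijective fun x : Fin (n + 1) × Perm (Fin n) => succAboveCons x.1 x.2 := by
  refine (Fintype.bijective_iff_injective_and_card _).2
    ⟨?_, by simp [Fintype.card_perm, Nat.factorial_succ]⟩
  rintro ⟨k, e⟩ ⟨k', e'⟩ h
  obtain rfl : k = k' := by simpa using congr($h 0)
  obtain rfl : e = e' :=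
    Equiv.ext fun i => k.succAbove_right_injective (by simpa using congr($h i.succ))
  rfl

end Equiv.Perm

section Bialternant

variable {R : Type*} [CommRing R] {n : ℕ}

def alternatingTriangleSum (A B : Fin n → R) : R :=
  ∑ σ : Perm (Fin n), (Perm.sign σ : ℤ) • ∏ p, ∏ q ∈ Ici p, (A (σ q) - B (σ p))

def powDiffMatrix (A B : Fin n → R) : Matrix (Fin n) (Fin n) R :=
  of fun i j => A i ^ ((j : ℕ) + 1) - B i ^ ((j : ℕ) + 1)

theorem alternatingTriangleSum_succ (A B : Fin (n + 1) → R) :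
    alternatingTriangleSum A B = ∑ k : Fin (n + 1), (-1) ^ (k : ℕ) *
      ((∏ l, (A l - B k)) * alternatingTriangleSum (A ∘ k.succAbove) (B ∘ k.succAbove)) := by
  rw [alternatingTriangleSum, ← Fintype.sum_bijective _ Perm.succAboveCons_bijective _ _
    fun _ => rfl, Fintype.sum_prod_type]
  refine sum_congr rfl fun k _ => ?_
  simp only [Fin.prod_prod_Ici_succ, Perm.succAboveCons_zero, Perm.succAboveCons_succ,
    Perm.sign_succAboveCons, Fintype.prod_equiv (Perm.succAboveCons k _) _ (fun l => A l - B k)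
      fun _ => rfl, alternatingTriangleSum, mul_sum]
  refine sum_congr rfl fun e _ => ?_
  simp only [zsmul_eq_mul, Function.comp_apply]
  push_cast
  ring

open Polynomial in
theorem powDiffMatrix_mulVec_coeff_prod_X_sub_C [Nontrivial R] (A B : Fin (n + 1) → R)
    (i : Fin (n + 1)) :
    (powDiffMatrix A B *ᵥ fun j => (∏ l, (X - C (A l))).coeff ((j : ℕ) + 1)) i =
      (-1) ^ n * ∏ l, (A l - B i) := by
  calc _ = (∏ l, (X - C (A l))).eval (A i) - (∏ l, (X - C (A l))).eval (B i) := by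
        rw [eval_sub_eval_eq_sum (n := n + 1) (by simp)]
        simp [mulVec, dotProduct, powDiffMatrix, mul_comm]
    _ = 0 - ∏ l, -(A l - B i) := by
        simp only [eval_prod, eval_sub, eval_X, eval_C, neg_sub]
        rw [prod_eq_zero (mem_univ i) (sub_self _)]
    _ = (-1) ^ n * ∏ l, (A l - B i) := by
        rw [prod_neg, card_univ, Fintype.card_fin]
        ring

open Polynomial in
theorem det_powDiffMatrix_succ (A B : Fin (n + 1) → R) :
    (powDiffMatrix A B).det = ∑ k : Fin (n + 1), (-1) ^ (k : ℕ) *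
      ((∏ l, (A l - B k)) * (powDiffMatrix (A ∘ k.succAbove) (B ∘ k.succAbove)).det) := by
  nontriviality R
  set c : Fin (n + 1) → R := fun j => (∏ l, (X - C (A l))).coeff ((j : ℕ) + 1)
  have hc : c (Fin.last n) = 1 := by
    simpa [c] using (monic_prod_of_monic univ _ fun l _ => monic_X_sub_C (A l)).coeff_natDegree
  have hsign : (-1 : R) ^ n * (-1) ^ n = 1 := by
    rw [← pow_add]
    exact Even.neg_one_pow ⟨n, rfl⟩
  calc (powDiffMatrix A B).det
      = ((powDiffMatrix A B).updateCol (Fin.last n) (powDiffMatrix A B *ᵥ c)).det := by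
        rw [det_updateCol_mulVec, hc, one_mul]
    _ = _ := by
      rw [det_succ_column _ (Fin.last n)]
      refine sum_congr rfl fun k _ => ?_
      have hminor : (powDiffMatrix A B).submatrix k.succAbove (Fin.last n).succAbove =
          powDiffMatrix (A ∘ k.succAbove) (B ∘ k.succAbove) := by
        ext i j
        simp [powDiffMatrix]
      rw [updateCol_self, powDiffMatrix_mulVec_coeff_prod_X_sub_C, submatrix_updateCol_succAbove,
        hminor, pow_add, Fin.val_last]
      linear_combination (-1) ^ (k : ℕ) * (∏ l, (A l - B k)) *
        (powDiffMatrix (A ∘ k.succAbove) (B ∘ k.succAbove)).det * hsign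

theorem alternatingTriangleSum_eq_det (A B : Fin n → R) :
    alternatingTriangleSum A B = (powDiffMatrix A B).det := by
  induction n with
  | zero => simp [alternatingTriangleSum]
  | succ n ih => simp only [alternatingTriangleSum_succ, det_powDiffMatrix_succ, ih]

end Bialternant

theorem stmt1_general {K : Type*} [Field K] (n : ℕ) (u v w : K) (X : Fin n → K) :
    ∑ σ : Equiv.Perm (Fin n),
        (Equiv.Perm.sign σ : ℤ) •
          ∏ p : Fin n, ∏ q ∈ Finset.Ici p, (u * X (σ q) + v * (X (σ p))⁻¹ + w) =
      Matrix.det (Matrix.of fun i j : Fin n =>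
        (u * X i + w) ^ ((j : ℕ) + 1) - (-(v * (X i)⁻¹)) ^ ((j : ℕ) + 1)) := by
  have h := alternatingTriangleSum_eq_det (fun i => u * X i + w) (fun i => -(v * (X i)⁻¹))
  rw [alternatingTriangleSum, powDiffMatrix] at h
  simp_rw [sub_neg_eq_add, add_right_comm _ w] at h
  exact h

/-- The bialternant identity of Section 7.2:
∑_σ sgn(σ) ∏_{1 ≤ p ≤ q ≤ n} (u X_{σ(q)} + v X_{σ(p)}⁻¹ + w)
  = det( (u X_i + w)^j − (−v X_i⁻¹)^j ). -/
theorem stmt1 {K : Type*} [Field K] (n : ℕ) (hn : 1 ≤ n) (u v w : K) (X : Fin n → K)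
    (hX : ∀ i, X i ≠ 0) :
    ∑ σ : Equiv.Perm (Fin n),
        (Equiv.Perm.sign σ : ℤ) •
          ∏ p : Fin n, ∏ q ∈ Finset.Ici p, (u * X (σ q) + v * (X (σ p))⁻¹ + w) =
      Matrix.det (Matrix.of fun i j : Fin n =>
        (u * X i + w) ^ ((j : ℕ) + 1) - (-(v * (X i)⁻¹)) ^ ((j : ℕ) + 1)) :=
  stmt1_general n u v w X
end

section
/- Let n ≥ 1, let K be a field, let X₁,…,Xₙ be pairwise distinct elements of K, and let f₁,…,fₙ : K → K be arbitrary functions. Then det_{1≤i,j≤n}( f_j(X_i) ) = ∏_{1≤i<j≤n}(X_j − X_i) · det_{1≤i,j≤n}( ∑_{k=1}^{i} f_j(X_k) / ∏_{1≤l≤i, l≠k}(X_k − X_l) ). -/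
/-!
Let `C` be the lower-triangular matrix with entries `C i k = (∏_{l ≤ i, l ≠ k} (X k - X l))⁻¹`
for `k ≤ i`. The matrix of divided differences is `C * (f j (X i))`, and the diagonal of `C`
consists of the inverses of the factors `∏_{l < i} (X i - X l)` of the Vandermonde product,
so taking determinants gives the identity.
-/

open Finset Matrix

namespace DividedDifference

variable {K ι : Type*} [Field K] [LinearOrder ι] [LocallyFiniteOrderBot ι]

/-- The coefficients of `f (X k)` in the divided difference `f[X₁, …, X_i]`. -/
def coeffMatrix (X : ι → K) : Matrix ι ι K :=
  of fun i k => if k ≤ i then (∏ l ∈ (Iic i).erase k, (X k - X l))⁻¹ else 0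

theorem of_divDiff_eq_coeffMatrix_mul [Fintype ι] (X : ι → K) (f : ι → K → K) :
    (of fun i j => ∑ k ∈ Iic i, f j (X k) / ∏ l ∈ (Iic i).erase k, (X k - X l)) =
      coeffMatrix X * of fun i j => f j (X i) := by
  ext i j
  simp only [coeffMatrix, mul_apply, of_apply, ite_mul, zero_mul, ← mem_Iic]
  rw [sum_ite_mem, univ_inter]
  exact sum_congr rfl fun k _ => by rw [div_eq_inv_mul]

theorem coeffMatrix_isLowerTriangular (X : ι → K) : (coeffMatrix X).IsLowerTriangular :=
  fun i k h => by
    simp only [coeffMatrix, of_apply, if_neg (not_le.mpr (OrderDual.toDual_lt_toDual.mp h))]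

theorem det_coeffMatrix [Fintype ι] (X : ι → K) :
    (coeffMatrix X).det = ∏ i, (∏ l ∈ Iio i, (X i - X l))⁻¹ := by
  rw [det_of_isLowerTriangular _ (coeffMatrix_isLowerTriangular X)]
  simp only [coeffMatrix, of_apply, le_refl, if_true, Iic_erase]

end DividedDifference

theorem Finset.prod_prod_Ioi_eq_prod_prod_Iio {ι M : Type*} [CommMonoid M] [Fintype ι]
    [LinearOrder ι] [LocallyFiniteOrderBot ι] [LocallyFiniteOrderTop ι]
    (g : ι → ι → M) :
    ∏ i, ∏ j ∈ Ioi i, g i j = ∏ j, ∏ i ∈ Iio j, g i j :=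
  prod_comm' fun i j => by simp

theorem prod_Iio_sub_ne_zero {K ι : Type*} [Field K] [LinearOrder ι] [LocallyFiniteOrderBot ι]
    {X : ι → K} (hX : Function.Injective X) (i : ι) : ∏ l ∈ Iio i, (X i - X l) ≠ 0 :=
  prod_ne_zero_iff.mpr fun _ hl => sub_ne_zero.mpr <| hX.ne (mem_Iio.mp hl).ne'

theorem stmt2_general {K : Type*} [Field K] (n : ℕ) (X : Fin n → K)
    (hX : Function.Injective X) (f : Fin n → K → K) :
    Matrix.det (Matrix.of fun i j : Fin n => f j (X i)) =
      (∏ i : Fin n, ∏ j ∈ Finset.Ioi i, (X j - X i)) *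
        Matrix.det (Matrix.of fun i j : Fin n =>
          ∑ k ∈ Finset.Iic i, f j (X k) / ∏ l ∈ (Finset.Iic i).erase k, (X k - X l)) := by
  rw [DividedDifference.of_divDiff_eq_coeffMatrix_mul, det_mul,
    DividedDifference.det_coeffMatrix, prod_prod_Ioi_eq_prod_prod_Iio (fun i j => X j - X i),
    ← mul_assoc, ← prod_mul_distrib,
    prod_congr rfl fun i _ => mul_inv_cancel₀ (prod_Iio_sub_ne_zero hX i), prod_const_one,
    one_mul]

/-- First assertion of Lemma 6.2: det(f_j(X_i)) equals the Vandermonde product times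
the determinant of the matrix of divided differences f_j[X₁,…,X_i]. -/
theorem stmt2 {K : Type*} [Field K] (n : ℕ) (hn : 1 ≤ n) (X : Fin n → K)
    (hX : Function.Injective X) (f : Fin n → K → K) :
    Matrix.det (Matrix.of fun i j : Fin n => f j (X i)) =
      (∏ i : Fin n, ∏ j ∈ Finset.Ioi i, (X j - X i)) *
        Matrix.det (Matrix.of fun i j : Fin n =>
          ∑ k ∈ Finset.Iic i, f j (X k) / ∏ l ∈ (Finset.Iic i).erase k, (X k - X l)) :=
  stmt2_general n X hX f
end

section
/- Let n ≥ 1, let R be a commutative ring, let X₁,…,Xₙ ∈ R, and let i, j ≥ 1 be integers. Then e_{i+j−1}(X₁,…,Xₙ) = ∑_{k=1}^{n} e_{i−1}(X₁,…,X_{n−k}) · X_{n−k+1} · e_{j−1}(X_{n−k+2},…,Xₙ). -/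
/-!
Expand `e_{a+b+1}(x₁, …, x_N)` according to which chosen variable comes `(a+1)`-st in list order:
if it is `x_k`, the subset consists of `a` variables before `x_k` and `b` after it. The
identity follows by induction on the list from `e_{k+1}(x :: l) = e_{k+1}(l) + x e_k(l)`.
-/

/-- The elementary symmetric polynomial of degree `k` in the variables given by the list `l`. -/
def ee {R : Type*} [CommSemiring R] (k : ℕ) (l : List R) : R :=
  ∑ s ∈ Finset.powersetCard k (Finset.univ : Finset (Fin l.length)), ∏ i ∈ s, l.get i

/-- The list of variables X_a, X_{a+1}, …, X_b (empty if a > b). -/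
def seg {R : Type*} (X : ℕ → R) (a b : ℕ) : List R :=
  (List.range (b + 1 - a)).map fun t => X (a + t)

section
variable {R : Type*} [CommSemiring R]

theorem Multiset.esymm_cons_succ (x : R) (s : Multiset R) (k : ℕ) :
    (x ::ₘ s).esymm (k + 1) = s.esymm (k + 1) + x * s.esymm k := by
  simp only [Multiset.esymm, Multiset.powersetCard_cons, Multiset.map_add, Multiset.sum_add,
    Multiset.map_map, Function.comp_def, Multiset.prod_cons, Multiset.sum_map_mul_left]

theorem ee_eq_esymm (k : ℕ) (l : List R) : ee k l = (l : Multiset R).esymm k := by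
  rw [ee, ← Finset.esymm_map_val]
  congr 1
  change ((List.finRange l.length : Multiset (Fin l.length)).map l.get) = _
  rw [Multiset.map_coe, List.map_get_finRange]

@[simp] theorem ee_zero (l : List R) : ee 0 l = 1 := by
  simp [ee]

@[simp] theorem ee_succ_nil (k : ℕ) : ee (k + 1) ([] : List R) = 0 := by
  simp [ee_eq_esymm, Multiset.esymm, Multiset.powersetCard_zero_right]

theorem ee_succ_cons (k : ℕ) (x : R) (l : List R) :
    ee (k + 1) (x :: l) = ee (k + 1) l + x * ee k l := by
  simp only [ee_eq_esymm, ← Multiset.cons_coe, Multiset.esymm_cons_succ]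

theorem ee_add_add_one (a b : ℕ) (l : List R) :
    ee (a + b + 1) l = ∑ k ∈ Finset.range l.length,
      ee a (l.take k) * l.getD k 0 * ee b (l.drop (k + 1)) := by
  induction l generalizing a with
  | nil => simp
  | cons x l ih =>
    simp only [List.length_cons, Finset.sum_range_succ', List.take_succ_cons, List.getD_cons_succ,
      List.drop_succ_cons, List.take_zero, List.getD_cons_zero, List.drop_zero]
    cases a with
    | zero =>
      have h0 := ih 0
      simp only [zero_add, ee_zero, one_mul] at h0 ⊢
      rw [ee_succ_cons, h0]
    | succ a =>
      rw [add_right_comm a 1 b, ee_succ_cons, show a + b + 1 + 1 = a + 1 + b + 1 by omega,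
        ih (a + 1), ih a, Finset.mul_sum]
      simp only [ee_succ_cons, ee_succ_nil, zero_mul, add_zero, add_mul, Finset.sum_add_distrib,
        mul_assoc]

end

section
variable {R : Type*} (X : ℕ → R)

@[simp] theorem length_seg (a b : ℕ) : (seg X a b).length = b + 1 - a := by
  simp [seg]

theorem seg_drop (a b k : ℕ) : (seg X a b).drop k = seg X (a + k) b := by
  apply List.ext_getElem
  · simp only [List.length_drop, length_seg]
    omega
  · intro i _ _
    simp only [seg, List.getElem_drop, List.getElem_map, List.getElem_range, add_assoc]

theorem seg_one_take (b k : ℕ) : (seg X 1 b).take k = seg X 1 (min k b) := by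
  simp [seg, ← List.map_take, List.take_range]

theorem seg_getD [Zero R] (a b k : ℕ) (hk : k < b + 1 - a) :
    (seg X a b).getD k 0 = X (a + k) := by
  simp [seg, hk]

end

theorem ee_seg_one_add_add_one {R : Type*} [CommSemiring R] (X : ℕ → R) (a b n : ℕ) :
    ee (a + b + 1) (seg X 1 n) =
      ∑ m ∈ Finset.range n, ee a (seg X 1 m) * X (m + 1) * ee b (seg X (m + 2) n) := by
  rw [ee_add_add_one, length_seg, Nat.add_sub_cancel]
  refine Finset.sum_congr rfl fun m hm => ?_
  have hmn : m < n := Finset.mem_range.mp hm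
  rw [seg_one_take, min_eq_left hmn.le, seg_getD X 1 n m (by omega), seg_drop, add_comm 1 m,
    add_comm 1 (m + 1)]

theorem stmt9_general {R : Type*} [CommRing R] (n : ℕ) (X : ℕ → R) (i j : ℕ)
    (hi : 1 ≤ i) (hj : 1 ≤ j) :
    ee (i + j - 1) (seg X 1 n) =
      ∑ k ∈ Finset.Icc 1 n,
        ee (i - 1) (seg X 1 (n - k)) * X (n + 1 - k) * ee (j - 1) (seg X (n + 2 - k) n) := by
  rw [show i + j - 1 = (i - 1) + (j - 1) + 1 by omega, ee_seg_one_add_add_one]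
  apply Finset.sum_nbij' (n - ·) (n - ·)
  iterate 4 (intro k hk; simp only [Finset.mem_range, Finset.mem_Icc] at hk ⊢; omega)
  · intro m hm
    have hmn : m < n := by simpa using hm
    rw [Nat.sub_sub_self hmn.le, show n + 1 - (n - m) = m + 1 by omega,
      show n + 2 - (n - m) = m + 2 by omega]

/-- The matrix factorization claim of Section 7.4:
e_{i+j−1}(X₁,…,Xₙ) = ∑_{k=1}^{n} e_{i−1}(X₁,…,X_{n−k}) X_{n−k+1} e_{j−1}(X_{n−k+2},…,Xₙ). -/
theorem stmt9 {R : Type*} [CommRing R] (n : ℕ) (hn : 1 ≤ n) (X : ℕ → R) (i j : ℕ)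
    (hi : 1 ≤ i) (hj : 1 ≤ j) :
    ee (i + j - 1) (seg X 1 n) =
      ∑ k ∈ Finset.Icc 1 n,
        ee (i - 1) (seg X 1 (n - k)) * X (n + 1 - k) * ee (j - 1) (seg X (n + 2 - k) n) :=
  stmt9_general n X i j hi hj
end

section
/- Let n ≥ 1, let R be a commutative ring, let a₁,…,aₙ, b₁,…,bₙ, t ∈ R. Then det_{1≤i,j≤n}( a_i^j − b_i^j ) = det_{1≤i,j≤n}( (a_i + t)^{j−1}·a_i − (b_i + t)^{j−1}·b_i ). -/
/-! Expanding `(x + t) ^ j * x` binomially writes the right-hand matrix as the left-hand one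
times the upper unitriangular matrix `(C(j, k) t ^ (j - k))_{k j}`, whose determinant is `1`. -/

open Matrix Finset

section

variable {R : Type*} [CommRing R]

/-- No case split on `k ≤ j` is needed: `Nat.choose j k = 0` for `j < k`. -/
def binomialShiftMatrix (n : ℕ) (t : R) : Matrix (Fin n) (Fin n) R :=
  of fun k j => ((j : ℕ).choose k : R) * t ^ ((j : ℕ) - k)

lemma det_binomialShiftMatrix (n : ℕ) (t : R) : (binomialShiftMatrix n t).det = 1 := by
  rw [det_of_isUpperTriangular]
  · simp [binomialShiftMatrix]
  · intro k j (hjk : j < k)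
    simp [binomialShiftMatrix, Nat.choose_eq_zero_of_lt hjk]

lemma add_pow_mul_eq_sum_binomialShiftMatrix {n : ℕ} (x t : R) (j : Fin n) :
    (x + t) ^ (j : ℕ) * x = ∑ k : Fin n, x ^ ((k : ℕ) + 1) * binomialShiftMatrix n t k j := by
  simp only [binomialShiftMatrix, of_apply]
  rw [Fin.sum_univ_eq_sum_range
    (fun k => x ^ (k + 1) * (((j : ℕ).choose k : R) * t ^ ((j : ℕ) - k))), add_pow, sum_mul]
  calc ∑ k ∈ range ((j : ℕ) + 1), x ^ k * t ^ ((j : ℕ) - k) * ((j : ℕ).choose k : R) * x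
      = ∑ k ∈ range ((j : ℕ) + 1), x ^ (k + 1) * (((j : ℕ).choose k : R) * t ^ ((j : ℕ) - k)) :=
        sum_congr rfl fun k _ => by ring
    _ = _ := sum_subset (range_subset_range.mpr j.isLt) fun k _ hk => by
        rw [mem_range, Nat.lt_succ_iff, not_le] at hk
        simp [Nat.choose_eq_zero_of_lt hk]

lemma powMatrix_mul_binomialShiftMatrix {n : ℕ} (a b : Fin n → R) (t : R) :
    (of fun i j : Fin n => a i ^ ((j : ℕ) + 1) - b i ^ ((j : ℕ) + 1)) * binomialShiftMatrix n t =
      of fun i j : Fin n => (a i + t) ^ (j : ℕ) * a i - (b i + t) ^ (j : ℕ) * b i := by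
  ext i j
  simp only [mul_apply, of_apply, sub_mul, sum_sub_distrib,
    add_pow_mul_eq_sum_binomialShiftMatrix]

end

theorem stmt12_general {R : Type*} [CommRing R] (n : ℕ) (a b : Fin n → R) (t : R) :
    Matrix.det (Matrix.of fun i j : Fin n => a i ^ ((j : ℕ) + 1) - b i ^ ((j : ℕ) + 1)) =
      Matrix.det (Matrix.of fun i j : Fin n =>
        (a i + t) ^ (j : ℕ) * a i - (b i + t) ^ (j : ℕ) * b i) := by
  rw [← powMatrix_mul_binomialShiftMatrix a b t, det_mul, det_binomialShiftMatrix, mul_one]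

/-- The elementary-column-operation identity underlying equation (lr) in Section 7.3:
det(a_i^j − b_i^j) = det((a_i+t)^{j−1} a_i − (b_i+t)^{j−1} b_i). -/
theorem stmt12 {R : Type*} [CommRing R] (n : ℕ) (hn : 1 ≤ n) (a b : Fin n → R) (t : R) :
    Matrix.det (Matrix.of fun i j : Fin n => a i ^ ((j : ℕ) + 1) - b i ^ ((j : ℕ) + 1)) =
      Matrix.det (Matrix.of fun i j : Fin n =>
        (a i + t) ^ (j : ℕ) * a i - (b i + t) ^ (j : ℕ) * b i) :=
  stmt12_general n a b t
end

section
/- Let n ≥ 1, let R be a commutative ring, and let Y₁,…,Yₙ ∈ R. Then det_{1≤i,j≤n}( h_{j−1}(Y₁,…,Y_i) ) = ∏_{l=1}^{n} Y_l^{l−1}. -/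
/-!
Subtracting from each row of `(h_j(Y₁,…,Y_i))` the row above turns it, via
`h_{j+1}(l, y) - h_{j+1}(l) = y · h_j(l, y)`, into a matrix with first column `(1, 0, …, 0)` whose
complementary minor is `(Y_{i+1} · h_j(Y₁,…,Y_{i+1}))`: row-scaled, it is a matrix of the same
shape with one more variable in every row. So the induction runs for rows `h_j(L_i)` along any
chain of lists `L_{i+1} = L_i ++ [z_{i+1}]`. The recursion for `h` is read off the generating
function `∏_{y ∈ l} (1 - yX)⁻¹`, i.e. the product of the series `∑ₜ yᵗXᵗ`.
-/

/-- The complete homogeneous symmetric polynomial of degree `k` in the variables given by the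
list `l`: the sum of all monomials of total degree `k`. -/
def hh {R : Type*} [CommSemiring R] (k : ℕ) (l : List R) : R :=
  ∑ a ∈ Finset.Nat.antidiagonalTuple l.length k, ∏ i : Fin l.length, l.get i ^ a i

open PowerSeries in
lemma hh_eq_coeff_prod_geom {R : Type*} [CommSemiring R] (k : ℕ) (l : List R) :
    hh k l = coeff k ((l.map fun y => mk fun t => y ^ t).prod) := by
  rw [← Fin.prod_univ_fun_getElem l (fun y => mk fun t => y ^ t), coeff_prod]
  simp only [coeff_mk]
  refine Finset.sum_nbij' (fun a => Finsupp.equivFunOnFinite.symm a) (fun f => f) ?_ ?_ ?_ ?_ ?_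
  · intro a ha
    rw [Finset.Nat.mem_antidiagonalTuple] at ha
    simp [Finset.mem_finsuppAntidiag, ha]
  · intro f hf
    rw [Finset.mem_finsuppAntidiag] at hf
    rw [Finset.Nat.mem_antidiagonalTuple]
    simpa using hf.1
  · intro a _
    rfl
  · intro f _
    simp
  · intro a _
    simp [List.get_eq_getElem]

lemma hh_zero {R : Type*} [CommSemiring R] (l : List R) : hh 0 l = 1 := by
  simp [hh, Finset.Nat.antidiagonalTuple_zero_right]

open PowerSeries in
lemma mk_pow_eq_one_add_C_mul_X_mul {R : Type*} [CommSemiring R] (y : R) :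
    mk (fun t => y ^ t) = 1 + C y * X * mk fun t => y ^ t := by
  ext (_ | n)
  · simp
  · rw [map_add, mul_assoc, coeff_C_mul, coeff_succ_X_mul]
    simp [pow_succ, mul_comm]

open PowerSeries in
lemma hh_succ_append_singleton {R : Type*} [CommSemiring R] (k : ℕ) (l : List R) (y : R) :
    hh (k + 1) (l ++ [y]) = hh (k + 1) l + y * hh k (l ++ [y]) := by
  simp only [hh_eq_coeff_prod_geom, List.map_append, List.map_cons, List.map_nil,
    List.prod_append, List.prod_cons, List.prod_nil, mul_one]
  set P := (l.map fun y => mk fun t => y ^ t).prod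
  conv_lhs => rw [mk_pow_eq_one_add_C_mul_X_mul y]
  rw [show P * (1 + C y * X * mk fun t => y ^ t) = P + C y * (X * (P * mk fun t => y ^ t)) by
    ring, map_add, coeff_C_mul, coeff_succ_X_mul]

namespace Matrix

variable {R : Type*} [CommRing R] {n : ℕ}

lemma det_eq_det_of_sub_pred_rows (A : Matrix (Fin (n + 1)) (Fin (n + 1)) R) :
    det A = det (of (Fin.cases (A 0) fun i => A i.succ - A i.castSucc)) :=
  det_eq_of_forall_row_eq_smul_add_pred (fun _ => 1) (fun _ => rfl) fun i j => by simp

lemma det_eq_mul_det_submatrix_of_col_zero (A : Matrix (Fin (n + 1)) (Fin (n + 1)) R)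
    (hA : ∀ i : Fin n, A i.succ 0 = 0) : det A = A 0 0 * det (A.submatrix Fin.succ Fin.succ) := by
  simp [det_succ_column_zero A, Fin.sum_univ_succ, hA]

end Matrix

theorem det_hh_of_append_singleton {R : Type*} [CommRing R] (n : ℕ) (L : ℕ → List R)
    (z : ℕ → R) (hL : ∀ i, L (i + 1) = L i ++ [z (i + 1)]) :
    Matrix.det (Matrix.of fun i j : Fin n => hh j (L i)) = ∏ i ∈ Finset.range n, z i ^ i := by
  induction n generalizing L z with
  | zero => simp
  | succ m ih =>
    set A := Matrix.of fun i j : Fin (m + 1) => hh j (L i)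
    set A' := Matrix.of fun i j : Fin m => hh j (L (i + 1))
    have hminor : (Matrix.of (Fin.cases (A 0) fun i => A i.succ - A i.castSucc)).submatrix
        Fin.succ Fin.succ = Matrix.of fun i j : Fin m => z (i + 1) * A' i j := by
      ext i j
      simp only [Matrix.submatrix_apply, Matrix.of_apply, Fin.cases_succ, Pi.sub_apply, A, A',
        Fin.val_succ, Fin.val_castSucc, hL, hh_succ_append_singleton, add_sub_cancel_left]
    rw [Matrix.det_eq_det_of_sub_pred_rows, Matrix.det_eq_mul_det_submatrix_of_col_zero _
      fun i => by simp [A, hh_zero], hminor, Matrix.det_mul_column,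
      ih (fun i => L (i + 1)) (fun i => z (i + 1)) fun i => hL (i + 1),
      Fin.prod_univ_eq_prod_range (fun i => z (i + 1)), Finset.prod_range_succ',
      ← Finset.prod_mul_distrib]
    simp [A, hh_zero, pow_succ']

lemma seg_one_succ {R : Type*} (Y : ℕ → R) (m : ℕ) :
    seg Y 1 (m + 1) = seg Y 1 m ++ [Y (m + 1)] := by
  simp [seg, List.range_succ, Nat.add_comm 1 m]

theorem stmt13_general {R : Type*} [CommRing R] (n : ℕ) (Y : ℕ → R) :
    Matrix.det (Matrix.of fun i j : Fin n => hh (j : ℕ) (seg Y 1 ((i : ℕ) + 1))) =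
      ∏ l ∈ Finset.Icc 1 n, Y l ^ (l - 1) := by
  rw [det_hh_of_append_singleton n (fun i => seg Y 1 (i + 1)) (fun i => Y (i + 1))
    fun i => seg_one_succ Y (i + 1), ← Finset.Ico_add_one_right_eq_Icc, ← zero_add 1,
    ← Finset.prod_Ico_add', ← Finset.range_eq_Ico]
  simp

/-- The determinant evaluation used in Section 7.4 to compute det(B_n):
det_{1≤i,j≤n}( h_{j−1}(Y₁,…,Y_i) ) = ∏_{l=1}^{n} Y_l^{l−1}. -/
theorem stmt13 {R : Type*} [CommRing R] (n : ℕ) (hn : 1 ≤ n) (Y : ℕ → R) :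
    Matrix.det (Matrix.of fun i j : Fin n => hh (j : ℕ) (seg Y 1 ((i : ℕ) + 1))) =
      ∏ l ∈ Finset.Icc 1 n, Y l ^ (l - 1) :=
  stmt13_general n Y
end
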